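/- Let δ₁,δ₂ ∈ {0,1} and s₁,s₂ ∈ ℂ with 0 < Re(s₁), 0 < Re(s₂), Re(s₁+s₂) < 1. With G_η(s) = π^{1/2-s} i^{η'} Γ((η'+s)/2)/Γ((1+η'-s)/2) (η' ∈ {0,1}, η' ≡ η mod 2), one has B(s₁,s₂) + (-1)^{δ₂}B(1-s₁-s₂,s₂) + (-1)^{δ₁}B(s₁,1-s₁-s₂) = G_{δ₁}(s₁) G_{δ₂}(s₂) / G_{δ₁+δ₂}(s₁+s₂). -/

import Mathlib

noncomputable def Gd (η : ℤ) (s : ℂ) : ℂ :=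
  ((Real.pi : ℂ) ^ ((1 : ℂ) / 2 - s)) * (if Even η then 1 else Complex.I) *
    Complex.Gamma (((if Even η then (0 : ℂ) else 1) + s) / 2) /
    Complex.Gamma ((1 + (if Even η then (0 : ℂ) else 1) - s) / 2)

noncomputable def eulerBeta (a b : ℂ) : ℂ :=
  Complex.Gamma a * Complex.Gamma b / Complex.Gamma (a + b)

/-!
By the duplication and reflection formulas, `G_η(s) = Γ_ℂ(s) (i^s + (-1)^η i^{-s}) / 2`, so the
right-hand side is `B(s₁, s₂) c₁ c₂ / c₁₂` with `c = i^s ± i^{-s}`, i.e. `2 cos (πs/2)` or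
`2i sin (πs/2)`. By reflection, `B(1 - s₁ - s₂, s₂) = B(s₁, s₂) sin πs₁ / sin π(s₁ + s₂)`, and
symmetrically. Since `2i sin πs = i^{2s} - i^{-2s}`, what remains is a polynomial identity in
`i^{±s₁}`, `i^{±s₂}` and the two signs.
-/

open Complex
open scoped Real

theorem mul_add_signed_sq_sub_sq {R : Type*} [CommRing R] {a a' b b' ε₁ ε₂ : R}
    (ha : a * a' = 1) (hb : b * b' = 1) (h₁ : ε₁ ^ 2 = 1) (h₂ : ε₂ ^ 2 = 1) :
    ((a * b) ^ 2 - (a' * b') ^ 2 + ε₂ * (a ^ 2 - a' ^ 2) + ε₁ * (b ^ 2 - b' ^ 2)) *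
        (a * b + ε₁ * ε₂ * (a' * b')) =
      ((a * b) ^ 2 - (a' * b') ^ 2) * (a + ε₁ * a') * (b + ε₂ * b') := by
  -- the signed sum is `(ab - ε₁ε₂a'b') (a + ε₁a') (b + ε₂b')`, and
  -- `(ab - ε₁ε₂a'b') (ab + ε₁ε₂a'b') = (ab)² - (a'b')²`
  linear_combination (a * b + ε₁ * ε₂ * (a' * b')) *
      (-(ε₁ * b ^ 2 - ε₁ * ε₂ ^ 2 * b' ^ 2) * ha - (ε₂ * a ^ 2 - ε₂ * ε₁ ^ 2 * a' ^ 2) * hb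
        + (ε₂ * a' ^ 2 + a' ^ 2 * b' ^ 2) * h₁ + (ε₁ * b' ^ 2 + ε₁ ^ 2 * a' ^ 2 * b' ^ 2) * h₂)
    - (a + ε₁ * a') * (b + ε₂ * b') * (a' ^ 2 * b' ^ 2) * (ε₁ ^ 2 * h₂ + h₁)

theorem neg_one_zpow_sq (δ : ℤ) : ((-1 : ℂ) ^ δ) ^ 2 = 1 := by
  rw [← zpow_natCast, ← zpow_mul]
  exact Even.neg_one_zpow ⟨δ, by push_cast; ring⟩

theorem I_cpow_add (s t : ℂ) : I ^ (s + t) = I ^ s * I ^ t := cpow_add _ _ I_ne_zero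

theorem I_cpow_mul_I_cpow_neg (s : ℂ) : I ^ s * I ^ (-s) = 1 := by
  rw [← I_cpow_add, add_neg_cancel, cpow_zero]

theorem I_cpow_eq_exp (s : ℂ) : I ^ s = cexp (π * s / 2 * I) := by
  rw [cpow_def_of_ne_zero I_ne_zero, log_I]
  ring_nf

theorem two_mul_cos_pi_mul_div_two (s : ℂ) : 2 * cos (π * s / 2) = I ^ s + I ^ (-s) := by
  rw [two_cos, I_cpow_eq_exp, I_cpow_eq_exp]
  ring_nf

theorem two_I_mul_sin_pi_mul_div_two (s : ℂ) :
    2 * I * sin (π * s / 2) = I ^ s - I ^ (-s) := by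
  rw [mul_right_comm, two_sin, I_cpow_eq_exp, I_cpow_eq_exp]
  ring_nf
  rw [I_sq]
  ring_nf

theorem two_I_mul_sin_pi_mul (s : ℂ) : 2 * I * sin (π * s) = (I ^ s) ^ 2 - (I ^ (-s)) ^ 2 := by
  rw [show (π : ℂ) * s = 2 * (π * s / 2) by ring, sin_two_mul]
  linear_combination (I ^ s + I ^ (-s)) * two_I_mul_sin_pi_mul_div_two s
    + 2 * I * sin (π * s / 2) * two_mul_cos_pi_mul_div_two s

theorem I_cpow_add_mul_I_cpow_sub {ε : ℂ} (hε : ε ^ 2 = 1) (s : ℂ) :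
    (I ^ s + ε * I ^ (-s)) * (I ^ s - ε * I ^ (-s)) = 2 * I * sin (π * s) := by
  linear_combination -(I ^ (-s)) ^ 2 * hε - two_I_mul_sin_pi_mul s

theorem I_cpow_add_mul_I_cpow_neg_ne_zero {ε s : ℂ} (hε : ε ^ 2 = 1) (hs : sin (π * s) ≠ 0) :
    I ^ s + ε * I ^ (-s) ≠ 0 :=
  left_ne_zero_of_mul (b := I ^ s - ε * I ^ (-s)) <| by
    rw [I_cpow_add_mul_I_cpow_sub hε]
    exact mul_ne_zero (mul_ne_zero two_ne_zero I_ne_zero) hs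

theorem sin_add_signed_sin_mul {ε₁ ε₂ : ℂ} (h₁ : ε₁ ^ 2 = 1) (h₂ : ε₂ ^ 2 = 1) (s t : ℂ) :
    (sin (π * (s + t)) + ε₂ * sin (π * s) + ε₁ * sin (π * t)) *
        (I ^ (s + t) + ε₁ * ε₂ * I ^ (-(s + t))) =
      sin (π * (s + t)) * (I ^ s + ε₁ * I ^ (-s)) * (I ^ t + ε₂ * I ^ (-t)) := by
  have key := mul_add_signed_sq_sub_sq (I_cpow_mul_I_cpow_neg s) (I_cpow_mul_I_cpow_neg t) h₁ h₂
  have hst := two_I_mul_sin_pi_mul (s + t)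
  have hs := two_I_mul_sin_pi_mul s
  have ht := two_I_mul_sin_pi_mul t
  rw [neg_add, I_cpow_add, I_cpow_add] at hst ⊢
  refine mul_left_cancel₀ (mul_ne_zero two_ne_zero I_ne_zero) ?_
  linear_combination key + (I ^ s * I ^ t + ε₁ * ε₂ * (I ^ (-s) * I ^ (-t))) *
      (hst + ε₂ * hs + ε₁ * ht) - (I ^ s + ε₁ * I ^ (-s)) * (I ^ t + ε₂ * I ^ (-t)) * hst

theorem mem_integerComplement_of_re_pos_of_re_lt_one {s : ℂ} (h0 : 0 < s.re) (h1 : s.re < 1) :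
    s ∈ integerComplement := by
  rintro ⟨k, rfl⟩
  rw [intCast_re] at h0 h1
  norm_cast at h0 h1
  omega

theorem ne_neg_natCast_of_re_pos {s : ℂ} (hs : 0 < s.re) (n : ℕ) : s ≠ -n := by
  rintro rfl
  simp at hs
  linarith

theorem Gamma_mul_Gamma_one_sub_mul_sin {z : ℂ} (h : sin (π * z) ≠ 0) :
    Gamma z * Gamma (1 - z) * sin (π * z) = π := by
  rw [Gamma_mul_Gamma_one_sub, div_mul_cancel₀ _ h]

theorem eulerBeta_comm (a b : ℂ) : eulerBeta a b = eulerBeta b a := by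
  rw [eulerBeta, eulerBeta, mul_comm, add_comm]

theorem eulerBeta_one_sub_sub_mul_sin {s t : ℂ} (hs : sin (π * s) ≠ 0)
    (hst : sin (π * (s + t)) ≠ 0) :
    eulerBeta (1 - s - t) t * sin (π * (s + t)) = eulerBeta s t * sin (π * s) := by
  have hs' := Gamma_mul_Gamma_one_sub_mul_sin hs
  have hst' := Gamma_mul_Gamma_one_sub_mul_sin hst
  have hπ : (π : ℂ) ≠ 0 := ofReal_ne_zero.mpr Real.pi_ne_zero
  have hΓs : Gamma (1 - s) ≠ 0 := fun h ↦ hπ (by rw [← hs', h]; ring)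
  have hΓst : Gamma (s + t) ≠ 0 := fun h ↦ hπ (by rw [← hst', h]; ring)
  rw [eulerBeta, eulerBeta, show 1 - s - t + t = 1 - s by ring,
    show 1 - s - t = 1 - (s + t) by ring, div_mul_eq_mul_div, div_mul_eq_mul_div,
    div_eq_div_iff hΓs hΓst]
  linear_combination Gamma t * (hst' - hs')

theorem signed_eulerBeta_sum_mul_sin {s t : ℂ} (hs : sin (π * s) ≠ 0) (ht : sin (π * t) ≠ 0)
    (hst : sin (π * (s + t)) ≠ 0) (ε₁ ε₂ : ℂ) :
    (eulerBeta s t + ε₂ * eulerBeta (1 - s - t) t + ε₁ * eulerBeta s (1 - s - t)) *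
        sin (π * (s + t)) =
      eulerBeta s t * (sin (π * (s + t)) + ε₂ * sin (π * s) + ε₁ * sin (π * t)) := by
  have hB₁ := eulerBeta_one_sub_sub_mul_sin hs hst
  have hB₂ := eulerBeta_one_sub_sub_mul_sin ht (by rwa [add_comm])
  rw [sub_right_comm, eulerBeta_comm (1 - s - t), add_comm t, eulerBeta_comm t] at hB₂
  linear_combination ε₂ * hB₁ + ε₁ * hB₂

theorem Gammaℂ_mul_Gammaℂ_div_Gammaℂ_add (s t : ℂ) :
    Gammaℂ s * Gammaℂ t / Gammaℂ (s + t) = 2 * eulerBeta s t := by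
  have h2π : (2 * π : ℂ) ≠ 0 := mul_ne_zero two_ne_zero (ofReal_ne_zero.mpr Real.pi_ne_zero)
  have hs : (2 * π : ℂ) ^ (-s) ≠ 0 := cpow_ne_zero_iff.mpr (Or.inl h2π)
  have ht : (2 * π : ℂ) ^ (-t) ≠ 0 := cpow_ne_zero_iff.mpr (Or.inl h2π)
  rw [Gammaℂ_def, Gammaℂ_def, Gammaℂ_def, eulerBeta, neg_add, cpow_add _ _ h2π]
  field_simp

theorem Gammaℝ_add_div_Gammaℝ_one_add_sub (a s : ℂ) :
    Gammaℝ (a + s) / Gammaℝ (1 + a - s) =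
      (π : ℂ) ^ (1 / 2 - s) * Gamma ((a + s) / 2) / Gamma ((1 + a - s) / 2) := by
  rw [Gammaℝ_def, Gammaℝ_def, show 1 / 2 - s = -(a + s) / 2 - -(1 + a - s) / 2 by ring,
    cpow_sub _ _ (ofReal_ne_zero.mpr Real.pi_ne_zero)]
  ring

theorem Gd_of_even {η : ℤ} (hη : Even η) (s : ℂ) : Gd η s = Gammaℝ s / Gammaℝ (1 - s) := by
  simpa [Gd, hη] using (Gammaℝ_add_div_Gammaℝ_one_add_sub 0 s).symm

theorem Gd_of_odd {η : ℤ} (hη : Odd η) (s : ℂ) :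
    Gd η s = I * (Gammaℝ (s + 1) / Gammaℝ (2 - s)) := by
  have h := Gammaℝ_add_div_Gammaℝ_one_add_sub 1 s
  rw [add_comm 1 s, show (1 : ℂ) + 1 - s = 2 - s by ring] at h
  simp only [h, Gd, if_neg (Int.not_even_iff_odd.mpr hη)]
  ring_nf

theorem Gd_eq (η : ℤ) {s : ℂ} (hs : ∀ n : ℕ, s ≠ -n) :
    Gd η s = Gammaℂ s * (I ^ s + (-1) ^ η * I ^ (-s)) / 2 := by
  rcases Int.even_or_odd η with hη | hη
  · have hs' (n : ℕ) : s ≠ -(2 * n + 1) := by exact_mod_cast hs (2 * n + 1)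
    rw [Gd_of_even hη, Gammaℝ_div_Gammaℝ_one_sub hs', hη.neg_one_zpow, one_mul,
      ← two_mul_cos_pi_mul_div_two]
    ring
  · have hΓ : Gammaℝ (s + 1) ≠ 0 := by
      rw [Ne, Gammaℝ_eq_zero_iff, not_exists]
      intro n hn
      exact hs (2 * n + 1) (by push_cast; linear_combination hn)
    rw [Gd_of_odd hη, div_eq_mul_inv, inv_Gammaℝ_two_sub hs, hη.neg_one_zpow, neg_one_mul,
      ← sub_eq_add_neg, ← two_I_mul_sin_pi_mul_div_two]
    field_simp

theorem Gd_mul_Gd_div_Gd_add (δ₁ δ₂ : ℤ) {s t : ℂ} (hs : ∀ n : ℕ, s ≠ -n)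
    (ht : ∀ n : ℕ, t ≠ -n) (hst : ∀ n : ℕ, s + t ≠ -n) :
    Gd δ₁ s * Gd δ₂ t / Gd (δ₁ + δ₂) (s + t) =
      eulerBeta s t * ((I ^ s + (-1) ^ δ₁ * I ^ (-s)) * (I ^ t + (-1) ^ δ₂ * I ^ (-t)) /
        (I ^ (s + t) + (-1) ^ δ₁ * (-1) ^ δ₂ * I ^ (-(s + t)))) := by
  have hB : eulerBeta s t = Gammaℂ s * Gammaℂ t / Gammaℂ (s + t) / 2 := by
    rw [Gammaℂ_mul_Gammaℂ_div_Gammaℂ_add]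
    ring
  rw [Gd_eq _ hs, Gd_eq _ ht, Gd_eq _ hst, zpow_add₀ (by norm_num), hB]
  simp only [div_eq_mul_inv, mul_inv]
  ring

theorem signed_beta_eq_Gd_general (δ₁ δ₂ : ℤ)
    (s₁ s₂ : ℂ) (h₁ : 0 < s₁.re) (h₂ : 0 < s₂.re) (h₃ : (s₁ + s₂).re < 1) :
    eulerBeta s₁ s₂ + (-1 : ℂ) ^ δ₂ * eulerBeta (1 - s₁ - s₂) s₂ +
        (-1 : ℂ) ^ δ₁ * eulerBeta s₁ (1 - s₁ - s₂) =
      Gd δ₁ s₁ * Gd δ₂ s₂ / Gd (δ₁ + δ₂) (s₁ + s₂) := by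
  have hre := add_re s₁ s₂
  have h₁₂ : 0 < (s₁ + s₂).re := by linarith
  have hS₁ := sin_pi_mul_ne_zero (mem_integerComplement_of_re_pos_of_re_lt_one h₁ (by linarith))
  have hS₂ := sin_pi_mul_ne_zero (mem_integerComplement_of_re_pos_of_re_lt_one h₂ (by linarith))
  have hS := sin_pi_mul_ne_zero (mem_integerComplement_of_re_pos_of_re_lt_one h₁₂ h₃)
  have hε₁ := neg_one_zpow_sq δ₁
  have hε₂ := neg_one_zpow_sq δ₂
  have hc := I_cpow_add_mul_I_cpow_neg_ne_zero (ε := (-1) ^ δ₁ * (-1) ^ δ₂)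
    (by rw [mul_pow, hε₁, hε₂, one_mul]) hS
  rw [Gd_mul_Gd_div_Gd_add δ₁ δ₂ (ne_neg_natCast_of_re_pos h₁) (ne_neg_natCast_of_re_pos h₂)
    (ne_neg_natCast_of_re_pos h₁₂), mul_div_assoc', eq_div_iff hc]
  refine mul_right_cancel₀ hS ?_
  linear_combination (I ^ (s₁ + s₂) + (-1) ^ δ₁ * (-1) ^ δ₂ * I ^ (-(s₁ + s₂))) *
      signed_eulerBeta_sum_mul_sin hS₁ hS₂ hS ((-1) ^ δ₁) ((-1) ^ δ₂)
    + eulerBeta s₁ s₂ * sin_add_signed_sin_mul hε₁ hε₂ s₁ s₂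

/-- For `δ₁, δ₂ ∈ {0,1}` and `0 < Re s₁`, `0 < Re s₂`, `Re(s₁+s₂) < 1`:
`B(s₁,s₂) + (-1)^{δ₂}B(1-s₁-s₂,s₂) + (-1)^{δ₁}B(s₁,1-s₁-s₂)
  = G_{δ₁}(s₁) G_{δ₂}(s₂) / G_{δ₁+δ₂}(s₁+s₂)`. -/
theorem signed_beta_eq_Gd (δ₁ δ₂ : ℤ) (hδ₁ : δ₁ = 0 ∨ δ₁ = 1) (hδ₂ : δ₂ = 0 ∨ δ₂ = 1)
    (s₁ s₂ : ℂ) (h₁ : 0 < s₁.re) (h₂ : 0 < s₂.re) (h₃ : (s₁ + s₂).re < 1) :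
    eulerBeta s₁ s₂ + (-1 : ℂ) ^ δ₂ * eulerBeta (1 - s₁ - s₂) s₂ +
        (-1 : ℂ) ^ δ₁ * eulerBeta s₁ (1 - s₁ - s₂) =
      Gd δ₁ s₁ * Gd δ₂ s₂ / Gd (δ₁ + δ₂) (s₁ + s₂) :=
  signed_beta_eq_Gd_general δ₁ δ₂ s₁ s₂ h₁ h₂ h₃
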